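/- arXiv:1404.5940 — 2 statements merged into one kernel-verified Lean document; each statement's English description precedes it below -/
import Mathlib

section
/- Let ρ^{AB} be a bipartite density matrix, σ^{AB} a separable density matrix with σ^{AB} ≤ σ^A ⊗ I^B, and α ∈ (1,2]. Then S_α(ρ^{AB} ‖ σ^{AB}) ≥ (1/(α−1)) log Tr[(Tr_B (ρ^{AB})^α)(σ^A)^{1−α}], where S_α(ρ‖σ) = (1/(α−1)) log Tr(ρ^α σ^{1−α}). -/
open Matrix BigOperators Kronecker ComplexOrder

noncomputable def funCalc {n : Type*} [Fintype n] [DecidableEq n]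
    (f : ℝ → ℝ) (A : Matrix n n ℂ) : Matrix n n ℂ :=
  if h : A.IsHermitian then
    (h.eigenvectorUnitary : Matrix n n ℂ) *
      Matrix.diagonal (fun i => (f (h.eigenvalues i) : ℂ)) *
      star (h.eigenvectorUnitary : Matrix n n ℂ)
  else 0

/-- Matrix power via functional calculus. -/
noncomputable def mpow {n : Type*} [Fintype n] [DecidableEq n]
    (A : Matrix n n ℂ) (α : ℝ) : Matrix n n ℂ :=
  funCalc (fun x => x ^ α) A

/-- A density matrix: positive semidefinite with unit trace. -/
def IsDensity {n : Type*} [Fintype n] [DecidableEq n] (ρ : Matrix n n ℂ) : Prop :=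
  ρ.PosSemidef ∧ ρ.trace = 1

/-- Partial trace over the second factor. -/
noncomputable def ptraceB {a b : Type*} [Fintype a] [Fintype b]
    (M : Matrix (a × b) (a × b) ℂ) : Matrix a a ℂ :=
  Matrix.of fun i j => ∑ k : b, M (i, k) (j, k)

/-- Partial trace over the first factor. -/
noncomputable def ptraceA {a b : Type*} [Fintype a] [Fintype b]
    (M : Matrix (a × b) (a × b) ℂ) : Matrix b b ℂ :=
  Matrix.of fun i j => ∑ k : a, M (k, i) (k, j)

/-- Fidelity F(ρ,σ) = Tr √(√σ ρ √σ). -/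
noncomputable def fid {n : Type*} [Fintype n] [DecidableEq n]
    (ρ σ : Matrix n n ℂ) : ℝ :=
  ((mpow (mpow σ (1/2) * ρ * mpow σ (1/2)) (1/2)).trace).re

/-- Outer product |ψ⟩⟨ψ|. -/
noncomputable def outer {n : Type*} (ψ : n → ℂ) : Matrix n n ℂ :=
  Matrix.of fun i j => ψ i * star (ψ j)

/-- Separability of a bipartite state. -/
def IsSepState {a b : Type*} [Fintype a] [Fintype b] [DecidableEq a] [DecidableEq b]
    (σ : Matrix (a × b) (a × b) ℂ) : Prop :=
  ∃ (k : ℕ) (q : Fin k → ℝ) (τ : Fin k → Matrix a a ℂ) (ω : Fin k → Matrix b b ℂ),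
    (∀ i, 0 ≤ q i) ∧ (∑ i, q i = 1) ∧ (∀ i, IsDensity (τ i)) ∧ (∀ i, IsDensity (ω i)) ∧
    σ = ∑ i, (q i : ℂ) • (τ i ⊗ₖ ω i)

/-- von Neumann entropy (base 2). -/
noncomputable def vnEntropy {n : Type*} [Fintype n] [DecidableEq n]
    (τ : Matrix n n ℂ) : ℝ :=
  -(τ * funCalc (Real.logb 2) τ).trace.re

/-- Rényi entropy of order β (base 2), with the von Neumann limit at β = 1. -/
noncomputable def renyiEntropy {n : Type*} [Fintype n] [DecidableEq n]
    (β : ℝ) (τ : Matrix n n ℂ) : ℝ :=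
  if β = 1 then vnEntropy τ else (1 / (1 - β)) * Real.logb 2 ((mpow τ β).trace.re)

/-- Rényi relative entropy of order α (base 2). -/
noncomputable def renyiRel {n : Type*} [Fintype n] [DecidableEq n]
    (α : ℝ) (ρ σ : Matrix n n ℂ) : ℝ :=
  (1 / (α - 1)) * Real.logb 2 ((mpow ρ α * mpow σ (1 - α)).trace.re)

/-!
Put `t = α - 1 ∈ (0, 1]`. The left-hand trace is
`Tr[(Tr_B ρ^α) (σ^A)^(-t)] = Tr[ρ^α ((σ^A)^(-t) ⊗ 1)] = Tr[ρ^α (σ^A ⊗ 1)^(-t)]`.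
Since `x ↦ x^t` is operator monotone and inversion is operator antitone, `x ↦ x^(-t)` is
operator antitone on strictly positive operators, so `σ ≤ σ^A ⊗ 1` gives
`(σ^A ⊗ 1)^(-t) ≤ σ^(-t)`, and pairing with `ρ^α ≥ 0` under the trace preserves this.
The left-hand trace is positive, so the inequality survives `logb 2` and the factor `1 / (α - 1)`.
-/

open scoped Matrix.Norms.L2Operator MatrixOrder

namespace CFC

variable {A : Type*} [CStarAlgebra A] [PartialOrder A] [StarOrderedRing A]

theorem rpow_neg_le_rpow_neg {a b : A} (hab : a ≤ b) (ha : IsStrictlyPositive a) {t : ℝ}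
    (ht : t ∈ Set.Icc (0 : ℝ) 1) : b ^ (-t) ≤ a ^ (-t) := by
  have hb : IsStrictlyPositive b := ha.of_le hab
  rcases ht.1.eq_or_lt with rfl | ht0
  · simp [rpow_zero a ha.nonneg, rpow_zero b hb.nonneg]
  have hinv : (b ^ t) ^ (-1 : ℝ) ≤ (a ^ t) ^ (-1 : ℝ) :=
    CStarAlgebra.rpow_neg_one_le_rpow_neg_one (rpow_le_rpow ht hab)
  rwa [rpow_rpow a t _ ht0.ne', rpow_rpow b t _ ht0.ne', mul_neg_one] at hinv

theorem rpow_ne_zero {a : A} (ha : 0 ≤ a) (ha0 : a ≠ 0) {r : ℝ} (hr : 0 < r) : a ^ r ≠ 0 := by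
  intro h
  apply ha0
  rw [← rpow_one a, ← mul_inv_cancel₀ hr.ne',
    ← rpow_rpow_of_exponent_nonneg a r r⁻¹ hr.le (by positivity), h]
  exact zero_rpow (inv_ne_zero hr.ne')

end CFC

namespace Matrix

section Trace

variable {n 𝕜 : Type*} [Fintype n] [DecidableEq n] [RCLike 𝕜]

theorem trace_mul_eq_trace_sqrt_mul_mul_sqrt (A : Matrix n n 𝕜) {B : Matrix n n 𝕜} (hB : 0 ≤ B) :
    (A * B).trace = (CFC.sqrt B * A * CFC.sqrt B).trace := by
  conv_lhs => rw [← CFC.sqrt_mul_sqrt_self B hB, ← Matrix.mul_assoc]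
  exact trace_mul_cycle A _ _

theorem trace_mul_nonneg {A B : Matrix n n 𝕜} (hA : 0 ≤ A) (hB : 0 ≤ B) :
    0 ≤ (A * B).trace := by
  rw [trace_mul_eq_trace_sqrt_mul_mul_sqrt A hB]
  exact (nonneg_iff_posSemidef.mp
    (conjugate_nonneg_of_nonneg hA (CFC.sqrt_nonneg B))).trace_nonneg

theorem trace_mul_pos {A B : Matrix n n 𝕜} (hA : 0 ≤ A) (hA0 : A ≠ 0)
    (hB : IsStrictlyPositive B) : 0 < (A * B).trace := by
  rw [trace_mul_eq_trace_sqrt_mul_mul_sqrt A hB.nonneg]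
  have hs : IsUnit (CFC.sqrt B) := (IsStrictlyPositive.sqrt B hB).isUnit
  have hconj : (CFC.sqrt B * A * CFC.sqrt B).PosSemidef :=
    nonneg_iff_posSemidef.mp (conjugate_nonneg_of_nonneg hA (CFC.sqrt_nonneg B))
  refine hconj.trace_nonneg.lt_of_ne' ?_
  rwa [Ne, hconj.trace_eq_zero_iff, hs.mul_left_eq_zero, hs.mul_right_eq_zero]

theorem trace_mul_le_trace_mul {A B C : Matrix n n 𝕜} (hA : 0 ≤ A) (hBC : B ≤ C) :
    (A * B).trace ≤ (A * C).trace := by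
  have h := trace_mul_nonneg hA (sub_nonneg.mpr hBC)
  rwa [Matrix.mul_sub, trace_sub, sub_nonneg] at h

end Trace

section KroneckerOne

variable {a b : Type*} [Fintype a] [Fintype b] [DecidableEq a] [DecidableEq b]

def kroneckerOneStarAlgHom (R : Type*) [CommSemiring R] [StarRing R] :
    Matrix a a R →⋆ₐ[R] Matrix (a × b) (a × b) R where
  toFun X := X ⊗ₖ (1 : Matrix b b R)
  map_one' := one_kronecker_one
  map_mul' X Y := by rw [← mul_kronecker_mul, mul_one]
  map_zero' := zero_kronecker _
  map_add' X Y := add_kronecker _ _ _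
  commutes' r := by
    simp only [algebraMap_eq_diagonal, Pi.algebraMap_def, Algebra.algebraMap_self,
      RingHom.id_apply]
    rw [← diagonal_one, diagonal_kronecker_diagonal]
    simp
  map_star' X := by
    simp only [star_eq_conjTranspose, conjTranspose_kronecker, conjTranspose_one]

@[simp]
theorem kroneckerOneStarAlgHom_apply {R : Type*} [CommSemiring R] [StarRing R]
    (X : Matrix a a R) : kroneckerOneStarAlgHom (b := b) R X = X ⊗ₖ 1 := rfl

theorem continuous_kroneckerOneStarAlgHom {R : Type*} [CommSemiring R] [StarRing R]
    [TopologicalSpace R] [IsTopologicalSemiring R] :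
    Continuous (kroneckerOneStarAlgHom (a := a) (b := b) R) := by
  refine continuous_pi fun p => continuous_pi fun q => ?_
  simp only [kroneckerOneStarAlgHom_apply, kroneckerMap_apply]
  fun_prop

theorem cfc_kronecker_one {𝕜 : Type*} [RCLike 𝕜] (f : ℝ → ℝ) {X : Matrix a a 𝕜}
    (hX : X.IsHermitian) : cfc f (X ⊗ₖ (1 : Matrix b b 𝕜)) = cfc f X ⊗ₖ 1 :=
  ((kroneckerOneStarAlgHom (b := b) 𝕜).map_cfc f X (X.finite_real_spectrum.continuousOn f)
    continuous_kroneckerOneStarAlgHom hX.isSelfAdjoint (hX.isSelfAdjoint.map _)).symm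

end KroneckerOne

end Matrix

section FunctionalCalculus

variable {n : Type*} [Fintype n] [DecidableEq n]

theorem funCalc_eq_cfc (f : ℝ → ℝ) (A : Matrix n n ℂ) : funCalc f A = cfc f A := by
  by_cases hA : A.IsHermitian
  · rw [hA.cfc_eq, funCalc, dif_pos hA, IsHermitian.cfc, Unitary.conjStarAlgAut_apply]
    rfl
  · rw [funCalc, dif_neg hA, cfc_apply_of_not_predicate (p := IsSelfAdjoint) A hA]

theorem mpow_eq_cfc (A : Matrix n n ℂ) (r : ℝ) : mpow A r = cfc (fun x : ℝ => x ^ r) A :=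
  funCalc_eq_cfc _ A

theorem mpow_eq_rpow {A : Matrix n n ℂ} (hA : 0 ≤ A) (r : ℝ) : mpow A r = A ^ r := by
  rw [mpow_eq_cfc, CFC.rpow_eq_cfc_real hA]

end FunctionalCalculus

section PartialTrace

variable {a b : Type*} [Fintype a] [Fintype b]

theorem ptraceB_isHermitian {M : Matrix (a × b) (a × b) ℂ} (hM : M.IsHermitian) :
    (ptraceB M).IsHermitian := by
  ext i j
  simp only [conjTranspose_apply, ptraceB, of_apply, star_sum]
  exact Finset.sum_congr rfl fun k _ => congrFun₂ hM (i, k) (j, k)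

theorem trace_ptraceB_mul [DecidableEq b] (M : Matrix (a × b) (a × b) ℂ) (X : Matrix a a ℂ) :
    (ptraceB M * X).trace = (M * (X ⊗ₖ (1 : Matrix b b ℂ))).trace := by
  simp only [trace, diag, mul_apply, ptraceB, of_apply, Finset.sum_mul, Fintype.sum_prod_type,
    kroneckerMap_apply, one_apply, mul_ite, mul_one, mul_zero, Finset.sum_ite_eq',
    Finset.mem_univ, if_true]
  exact Finset.sum_congr rfl fun i _ => Finset.sum_comm

end PartialTrace

theorem renyiRel_ge_marginal_bound_general {a b : Type*} [Fintype a] [Fintype b]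
    [DecidableEq a] [DecidableEq b]
    (ρ σ : Matrix (a × b) (a × b) ℂ) (hρ : IsDensity ρ)
    (hσpd : σ.PosDef)
    (hle : (ptraceB σ ⊗ₖ (1 : Matrix b b ℂ) - σ).PosSemidef)
    (α : ℝ) (hα1 : 1 < α) (hα2 : α ≤ 2) :
    (1 / (α - 1)) * Real.logb 2 ((ptraceB (mpow ρ α) * mpow (ptraceB σ) (1 - α)).trace.re)
      ≤ renyiRel α ρ σ := by
  set σA := ptraceB σ
  have hσ : IsStrictlyPositive σ := isStrictlyPositive_iff_posDef.mpr hσpd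
  have hσA : IsStrictlyPositive (σA ⊗ₖ (1 : Matrix b b ℂ)) := hσ.of_le hle
  have hρ0 : ρ ≠ 0 := fun h => by simpa [h] using hρ.2
  have hρα : 0 ≤ mpow ρ α := mpow_eq_rpow hρ.1.nonneg α ▸ CFC.rpow_nonneg
  have hρα0 : mpow ρ α ≠ 0 :=
    mpow_eq_rpow hρ.1.nonneg α ▸ CFC.rpow_ne_zero hρ.1.nonneg hρ0 (by linarith)
  have hlhs : (ptraceB (mpow ρ α) * mpow σA (1 - α)).trace
      = (mpow ρ α * (σA ⊗ₖ 1) ^ (1 - α)).trace := by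
    rw [trace_ptraceB_mul, mpow_eq_cfc σA,
      ← cfc_kronecker_one _ (ptraceB_isHermitian hσpd.1), CFC.rpow_eq_cfc_real hσA.nonneg]
  have hmono : (mpow ρ α * (σA ⊗ₖ 1) ^ (1 - α)).trace ≤ (mpow ρ α * mpow σ (1 - α)).trace := by
    rw [mpow_eq_rpow hσ.nonneg, show 1 - α = -(α - 1) by ring]
    exact trace_mul_le_trace_mul hρα
      (CFC.rpow_neg_le_rpow_neg hle hσ ⟨by linarith, by linarith⟩)
  have hpos : 0 < (mpow ρ α * (σA ⊗ₖ 1) ^ (1 - α)).trace :=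
    trace_mul_pos hρα hρα0 (hσA.rpow _ _)
  rw [renyiRel, hlhs]
  exact mul_le_mul_of_nonneg_left (Real.logb_le_logb_of_le one_lt_two
    (Complex.pos_iff.mp hpos).1 (Complex.le_def.mp hmono).1) (by rw [one_div_nonneg]; linarith)

theorem renyiRel_ge_marginal_bound {a b : Type*} [Fintype a] [Fintype b]
    [DecidableEq a] [DecidableEq b]
    (ρ σ : Matrix (a × b) (a × b) ℂ) (hρ : IsDensity ρ) (hσ : IsDensity σ)
    (hsep : IsSepState σ) (hσpd : σ.PosDef)
    (hle : (ptraceB σ ⊗ₖ (1 : Matrix b b ℂ) - σ).PosSemidef)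
    (α : ℝ) (hα1 : 1 < α) (hα2 : α ≤ 2) :
    (1 / (α - 1)) * Real.logb 2 ((ptraceB (mpow ρ α) * mpow (ptraceB σ) (1 - α)).trace.re)
      ≤ renyiRel α ρ σ :=
  renyiRel_ge_marginal_bound_general ρ σ hρ hσpd hle α hα1 hα2
end

section
/- (van Dam–Hayden inequality) Let ρ and σ be density matrices with fidelity F(ρ,σ) ≥ F > 0, and let α ∈ (1/2, 1), β = α/(2α−1). Then S_α(ρ) ≥ S_β(σ) + (2α/(1−α)) log F, where S_γ(τ) = (1/(1−γ)) log Tr(τ^γ). -/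
open Matrix BigOperators Kronecker ComplexOrder

/-!
With `C = √ρ √σ`, polar decomposition gives a contraction `W` with `F(ρ,σ) = Re Tr (W† C)`.
Splitting `C = ρ^(α/2) · (ρ^((1-α)/2) √σ)` and applying Cauchy–Schwarz for the Frobenius inner
product gives `F² ≤ Tr ρ^α · Tr (ρ^(1-α) σ)`. In the eigenbases of `ρ` and `σ` the last trace is
`∑ᵢⱼ |Kᵢⱼ|² aᵢ^(1-α) bⱼ` with `K` unitary, so the weights `|Kᵢⱼ|²` are doubly stochastic and
Hölder's inequality with the conjugate exponents `α/(1-α)` and `β` bounds it by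
`(Tr ρ^α)^((1-α)/α) (Tr σ^β)^(1/β)`. Hence `F² ≤ (Tr ρ^α)^(1/α) (Tr σ^β)^(1/β)`, and taking
logarithms gives the claim.
-/

theorem Real.inner_le_weighted_Lp_mul_Lq_of_nonneg {ι : Type*} (s : Finset ι) (w f g : ι → ℝ)
    (hw : ∀ i, 0 ≤ w i) (hf : ∀ i, 0 ≤ f i) (hg : ∀ i, 0 ≤ g i) {p q : ℝ}
    (hpq : p.HolderConjugate q) :
    ∑ i ∈ s, w i * (f i * g i) ≤
      (∑ i ∈ s, w i * f i ^ p) ^ (1 / p) * (∑ i ∈ s, w i * g i ^ q) ^ (1 / q) := by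
  have hsplit : ∀ i, w i = w i ^ (1 / p) * w i ^ (1 / q) := fun i => by
    rw [← Real.rpow_add' (hw i) (by simp [one_div, hpq.inv_add_inv_eq_one]), one_div, one_div,
      hpq.inv_add_inv_eq_one, Real.rpow_one]
  have hpow : ∀ {r : ℝ}, r ≠ 0 → ∀ i (x : ℝ), 0 ≤ x → (w i ^ (1 / r) * x) ^ r = w i * x ^ r :=
    fun hr i x hx => by
      rw [Real.mul_rpow (Real.rpow_nonneg (hw i) _) hx, ← Real.rpow_mul (hw i),
        one_div_mul_cancel hr, Real.rpow_one]
  have holder := Real.inner_le_Lp_mul_Lq_of_nonneg s hpq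
    (f := fun i => w i ^ (1 / p) * f i) (g := fun i => w i ^ (1 / q) * g i)
    (fun i _ => mul_nonneg (Real.rpow_nonneg (hw i) _) (hf i))
    (fun i _ => mul_nonneg (Real.rpow_nonneg (hw i) _) (hg i))
  simp only [hpow hpq.ne_zero _ _ (hf _), hpow hpq.symm.ne_zero _ _ (hg _)] at holder
  convert holder using 2 with i
  conv_lhs => rw [hsplit i]
  ring

theorem Real.holderConjugate_div_one_sub {α : ℝ} (hα₀ : 1 / 2 < α) (hα₁ : α < 1) :
    (α / (1 - α)).HolderConjugate (α / (2 * α - 1)) := by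
  have h2α : 0 < 2 * α - 1 := by linarith
  refine Real.holderConjugate_iff.mpr ⟨by rw [lt_div_iff₀ (by linarith)]; linarith, ?_⟩
  field_simp
  ring

section RCLikeMatrix

variable {n 𝕜 : Type*} [Fintype n] [RCLike 𝕜]

theorem Matrix.sq_re_trace_mul_conjTranspose_le (X Y : Matrix n n 𝕜) :
    RCLike.re (Y * Xᴴ).trace ^ 2 ≤ RCLike.re (X * Xᴴ).trace * RCLike.re (Y * Yᴴ).trace := by
  classical
  let := (1 : Matrix n n 𝕜).toMatrixSeminormedAddCommGroup PosSemidef.one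
  let := (1 : Matrix n n 𝕜).toMatrixInnerProductSpace PosSemidef.one
  have hcs : ‖(Y * 1 * Xᴴ).trace‖ * ‖(X * 1 * Yᴴ).trace‖ ≤
      RCLike.re (X * 1 * Xᴴ).trace * RCLike.re (Y * 1 * Yᴴ).trace :=
    inner_mul_inner_self_le X Y
  have hswap : (X * Yᴴ).trace = star (Y * Xᴴ).trace := by
    rw [← trace_conjTranspose, conjTranspose_mul, conjTranspose_conjTranspose]
  simp only [mul_one, hswap, RCLike.star_def, RCLike.norm_conj] at hcs
  calc RCLike.re (Y * Xᴴ).trace ^ 2 ≤ ‖(Y * Xᴴ).trace‖ ^ 2 :=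
        sq_le_sq' (neg_le_of_abs_le (RCLike.abs_re_le_norm _)) (RCLike.re_le_norm _)
    _ ≤ _ := by rwa [sq]

theorem Matrix.PosSemidef.one_sub_of_isIdempotentElem [DecidableEq n] {P : Matrix n n 𝕜}
    (hP : P.IsHermitian) (hPP : IsIdempotentElem P) : (1 - P).PosSemidef := by
  have h : 1 - P = (1 - P)ᴴ * (1 - P) := by
    rw [conjTranspose_sub, conjTranspose_one, hP.eq, sub_mul, mul_sub, mul_sub, hPP.eq]
    simp
  rw [h]
  exact posSemidef_conjTranspose_mul_self _

theorem Matrix.PosSemidef.re_trace_mul_mul_conjTranspose_le {m : Type*} [Fintype m]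
    [DecidableEq n] {W : Matrix n n 𝕜} (hW : (1 - Wᴴ * W).PosSemidef) (B : Matrix m n 𝕜) :
    RCLike.re (B * (Wᴴ * W) * Bᴴ).trace ≤ RCLike.re (B * Bᴴ).trace := by
  have h := (RCLike.nonneg_iff.mp (hW.mul_mul_conjTranspose_same B).trace_nonneg).1
  rw [Matrix.mul_sub, Matrix.sub_mul, Matrix.mul_one, trace_sub, map_sub] at h
  linarith

end RCLikeMatrix

section Unitary

variable {n : Type*} [Fintype n] [DecidableEq n]

theorem Matrix.sum_normSq_row_of_mem_unitaryGroup {K : Matrix n n ℂ}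
    (hK : K ∈ unitaryGroup n ℂ) (i : n) : ∑ j, Complex.normSq (K i j) = 1 := by
  have h := congrArg (fun M : Matrix n n ℂ => (M i i).re) (mem_unitaryGroup_iff.mp hK)
  simp only [mul_apply, star_apply, one_apply_eq, Complex.one_re, Complex.re_sum,
    RCLike.star_def, Complex.mul_conj, Complex.ofReal_re] at h
  exact h

theorem Matrix.sum_normSq_col_of_mem_unitaryGroup {K : Matrix n n ℂ}
    (hK : K ∈ unitaryGroup n ℂ) (j : n) : ∑ i, Complex.normSq (K i j) = 1 := by
  simpa [star_apply] using sum_normSq_row_of_mem_unitaryGroup (Unitary.star_mem hK) j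

theorem Matrix.sum_sum_normSq_mul_le_of_mem_unitaryGroup {K : Matrix n n ℂ}
    (hK : K ∈ unitaryGroup n ℂ) {x y : n → ℝ} (hx : ∀ i, 0 ≤ x i) (hy : ∀ j, 0 ≤ y j)
    {p q : ℝ} (hpq : p.HolderConjugate q) :
    ∑ i, ∑ j, Complex.normSq (K i j) * (x i * y j) ≤
      (∑ i, x i ^ p) ^ (1 / p) * (∑ j, y j ^ q) ^ (1 / q) := by
  have holder := Real.inner_le_weighted_Lp_mul_Lq_of_nonneg Finset.univ
    (fun ij : n × n => Complex.normSq (K ij.1 ij.2)) (fun ij => x ij.1) (fun ij => y ij.2)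
    (fun _ => Complex.normSq_nonneg _) (fun _ => hx _) (fun _ => hy _) hpq
  have hrows : ∑ i, ∑ j, Complex.normSq (K i j) * x i ^ p = ∑ i, x i ^ p := by
    simp only [← Finset.sum_mul, sum_normSq_row_of_mem_unitaryGroup hK, one_mul]
  have hcols : ∑ i, ∑ j, Complex.normSq (K i j) * y j ^ q = ∑ j, y j ^ q := by
    rw [Finset.sum_comm]
    simp only [← Finset.sum_mul, sum_normSq_col_of_mem_unitaryGroup hK, one_mul]
  simpa only [← Finset.univ_product_univ, Finset.sum_product, hrows, hcols] using holder

end Unitary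

section FunCalc

variable {n : Type*} [Fintype n] [DecidableEq n] {A B : Matrix n n ℂ}

theorem funCalc_of_isHermitian (hA : A.IsHermitian) (f : ℝ → ℝ) :
    funCalc f A = (hA.eigenvectorUnitary : Matrix n n ℂ) *
      diagonal (fun i => (f (hA.eigenvalues i) : ℂ)) *
      star (hA.eigenvectorUnitary : Matrix n n ℂ) :=
  dif_pos hA

theorem isHermitian_funCalc (f : ℝ → ℝ) (A : Matrix n n ℂ) : (funCalc f A).IsHermitian := by
  unfold funCalc
  split_ifs with hA
  · refine isHermitian_mul_mul_conjTranspose _ ?_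
    simp [IsHermitian, diagonal_conjTranspose, Pi.star_def]
  · exact isHermitian_zero

theorem funCalc_mul_funCalc (hA : A.IsHermitian) {f g h : ℝ → ℝ}
    (hfg : ∀ i, f (hA.eigenvalues i) * g (hA.eigenvalues i) = h (hA.eigenvalues i)) :
    funCalc f A * funCalc g A = funCalc h A := by
  have hU := mem_unitaryGroup_iff'.mp hA.eigenvectorUnitary.2
  simp only [funCalc_of_isHermitian hA, mul_assoc]
  rw [← mul_assoc (star _) _ _, hU, one_mul, ← mul_assoc (diagonal _), diagonal_mul_diagonal]
  simp only [← Complex.ofReal_mul, hfg]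

theorem funCalc_eq_self (hA : A.IsHermitian) {f : ℝ → ℝ}
    (hf : ∀ i, f (hA.eigenvalues i) = hA.eigenvalues i) : funCalc f A = A := by
  conv_rhs => rw [hA.spectral_theorem]
  simp [funCalc_of_isHermitian hA, hf, Unitary.conjStarAlgAut_apply, Function.comp_def]

theorem trace_funCalc (hA : A.IsHermitian) (f : ℝ → ℝ) :
    (funCalc f A).trace = ∑ i, (f (hA.eigenvalues i) : ℂ) := by
  rw [funCalc_of_isHermitian hA, trace_mul_cycle, mem_unitaryGroup_iff'.mp hA.eigenvectorUnitary.2,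
    one_mul, trace_diagonal]

theorem re_trace_funCalc (hA : A.IsHermitian) (f : ℝ → ℝ) :
    (funCalc f A).trace.re = ∑ i, f (hA.eigenvalues i) := by
  simp [trace_funCalc hA]

theorem re_trace_funCalc_mul_funCalc (hA : A.IsHermitian) (hB : B.IsHermitian) (f g : ℝ → ℝ) :
    (funCalc f A * funCalc g B).trace.re =
      ∑ i, ∑ j, Complex.normSq
        ((star (hA.eigenvectorUnitary : Matrix n n ℂ) * hB.eigenvectorUnitary) i j) *
        (f (hA.eigenvalues i) * g (hB.eigenvalues j)) := by
  set K := star (hA.eigenvectorUnitary : Matrix n n ℂ) * hB.eigenvectorUnitary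
  have hcycle : (funCalc f A * funCalc g B).trace =
      (diagonal (fun i => (f (hA.eigenvalues i) : ℂ)) * K *
        diagonal (fun j => (g (hB.eigenvalues j) : ℂ)) * star K).trace := by
    rw [funCalc_of_isHermitian hA, funCalc_of_isHermitian hB, star_mul, star_star]
    simp only [mul_assoc]
    rw [trace_mul_comm]
    simp only [K, mul_assoc]
  rw [hcycle]
  simp only [trace, diag_apply, Complex.re_sum]
  refine Finset.sum_congr rfl fun i _ => ?_
  rw [mul_apply, Complex.re_sum]
  refine Finset.sum_congr rfl fun j _ => ?_
  rw [mul_diagonal, diagonal_mul, star_apply, RCLike.star_def]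
  simp only [Complex.mul_re, Complex.mul_im, Complex.ofReal_re, Complex.ofReal_im,
    Complex.conj_re, Complex.conj_im, Complex.normSq_apply]
  ring

theorem re_trace_funCalc_mul_funCalc_le (hA : A.IsHermitian) (hB : B.IsHermitian)
    {f g : ℝ → ℝ} (hf : ∀ i, 0 ≤ f (hA.eigenvalues i)) (hg : ∀ j, 0 ≤ g (hB.eigenvalues j))
    {p q : ℝ} (hpq : p.HolderConjugate q) :
    (funCalc f A * funCalc g B).trace.re ≤
      (∑ i, f (hA.eigenvalues i) ^ p) ^ (1 / p) * (∑ j, g (hB.eigenvalues j) ^ q) ^ (1 / q) := by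
  rw [re_trace_funCalc_mul_funCalc hA hB]
  exact sum_sum_normSq_mul_le_of_mem_unitaryGroup
    (mul_mem (Unitary.star_mem hA.eigenvectorUnitary.2) hB.eigenvectorUnitary.2) hf hg hpq

theorem isHermitian_mpow (A : Matrix n n ℂ) (s : ℝ) : (mpow A s).IsHermitian :=
  isHermitian_funCalc _ A

theorem re_trace_mpow (hA : A.IsHermitian) (s : ℝ) :
    (mpow A s).trace.re = ∑ i, hA.eigenvalues i ^ s :=
  re_trace_funCalc hA _

theorem mpow_mul_mpow (hA : A.PosSemidef) {s t : ℝ} (hs : 0 ≤ s) (ht : 0 ≤ t) :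
    mpow A s * mpow A t = mpow A (s + t) :=
  funCalc_mul_funCalc hA.1 fun i => (Real.rpow_add_of_nonneg (hA.eigenvalues_nonneg i) hs ht).symm

theorem mpow_one (hA : A.IsHermitian) : mpow A 1 = A :=
  funCalc_eq_self hA fun _ => Real.rpow_one _

theorem mpow_half_mul_mpow_half (hA : A.PosSemidef) : mpow A (1 / 2) * mpow A (1 / 2) = A := by
  rw [mpow_mul_mpow hA (by norm_num) (by norm_num), add_halves, mpow_one hA.1]

theorem exists_contraction_conjTranspose_mul_eq_mpow_half (C : Matrix n n ℂ) :
    ∃ W : Matrix n n ℂ, (1 - Wᴴ * W).PosSemidef ∧ Wᴴ * C = mpow (Cᴴ * C) (1 / 2) := by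
  set M := Cᴴ * C
  have hM : M.PosSemidef := posSemidef_conjTranspose_mul_self C
  -- `0 ^ (-1/2) = 0` makes `mpow M (-1/2)` the pseudo-inverse of `mpow M (1/2)`.
  set W := C * mpow M (-1 / 2)
  have hWC : Wᴴ * C = mpow M (1 / 2) := by
    calc Wᴴ * C = mpow M (-1 / 2) * mpow M 1 := by
          rw [mpow_one hM.1, conjTranspose_mul, (isHermitian_mpow _ _).eq, mul_assoc]
      _ = mpow M (1 / 2) := by
          refine funCalc_mul_funCalc hM.1 fun i => ?_
          rcases (hM.eigenvalues_nonneg i).eq_or_lt with h0 | hpos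
          · simp [← h0, Real.zero_rpow]
          · rw [← Real.rpow_add hpos]
            norm_num
  set P := funCalc (fun x => x ^ (1 / 2 : ℝ) * x ^ (-1 / 2 : ℝ)) M
  have hWW : Wᴴ * W = P := by
    rw [← mul_assoc, hWC]
    exact funCalc_mul_funCalc hM.1 fun _ => rfl
  have hP : IsIdempotentElem P := by
    refine funCalc_mul_funCalc hM.1 fun i => ?_
    rcases (hM.eigenvalues_nonneg i).eq_or_lt with h0 | hpos
    · simp [← h0, Real.zero_rpow]
    · rw [← Real.rpow_add hpos]
      norm_num
  refine ⟨W, ?_, hWC⟩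
  rw [hWW]
  exact PosSemidef.one_sub_of_isIdempotentElem (isHermitian_funCalc _ _) hP

end FunCalc

section Fidelity

variable {n : Type*} [Fintype n] [DecidableEq n] {ρ σ : Matrix n n ℂ}

theorem fid_sq_le_re_trace_mpow_mul (hρ : ρ.PosSemidef) (hσ : σ.PosSemidef) {α : ℝ}
    (hα₀ : 0 ≤ α) (hα₁ : α ≤ 1) :
    fid ρ σ ^ 2 ≤ (mpow ρ α).trace.re * (mpow ρ (1 - α) * σ).trace.re := by
  set A := mpow ρ (α / 2)
  set R := mpow ρ ((1 - α) / 2)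
  set S := mpow σ (1 / 2)
  have hAH : Aᴴ = A := isHermitian_mpow _ _
  have hRH : Rᴴ = R := isHermitian_mpow _ _
  have hSH : Sᴴ = S := isHermitian_mpow _ _
  have hAR : A * R = mpow ρ (1 / 2) := by
    rw [mpow_mul_mpow hρ (by linarith) (by linarith)]
    congr 1
    ring
  obtain ⟨W, hW, hWC⟩ := exists_contraction_conjTranspose_mul_eq_mpow_half (A * R * S)
  have hfid : fid ρ σ = (R * S * Wᴴ * Aᴴ).trace.re := by
    have hCC : (A * R * S)ᴴ * (A * R * S) = S * ρ * S := by
      rw [hAR, conjTranspose_mul, hSH, (isHermitian_mpow _ _).eq, mul_assoc, ← mul_assoc (mpow ρ _),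
        mpow_half_mul_mpow_half hρ, ← mul_assoc]
    rw [fid, ← hCC, ← hWC, hAH, trace_mul_comm]
    simp only [mul_assoc]
    rw [trace_mul_comm A]
    simp only [mul_assoc]
  have hAA : (A * Aᴴ).trace.re = (mpow ρ α).trace.re := by
    rw [hAH, mpow_mul_mpow hρ (by linarith) (by linarith), add_halves]
  have hRS : (R * S * (R * S)ᴴ).trace.re = (mpow ρ (1 - α) * σ).trace.re := by
    rw [conjTranspose_mul, hSH, hRH, mul_assoc, ← mul_assoc S, mpow_half_mul_mpow_half hσ,
      trace_mul_comm, mul_assoc σ, mpow_mul_mpow hρ (by linarith) (by linarith), add_halves,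
      trace_mul_comm]
  have hcontr := hW.re_trace_mul_mul_conjTranspose_le (R * S)
  calc fid ρ σ ^ 2 ≤ (A * Aᴴ).trace.re * (R * S * Wᴴ * (R * S * Wᴴ)ᴴ).trace.re := by
        rw [hfid]
        exact sq_re_trace_mul_conjTranspose_le A (R * S * Wᴴ)
    _ ≤ (A * Aᴴ).trace.re * (R * S * (R * S)ᴴ).trace.re := by
        refine mul_le_mul_of_nonneg_left ?_ (posSemidef_self_mul_conjTranspose A).trace_nonneg.1
        rw [conjTranspose_mul, conjTranspose_conjTranspose]
        simp only [mul_assoc] at hcontr ⊢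
        exact hcontr
    _ = _ := by rw [hAA, hRS]

theorem re_trace_mpow_one_sub_mul_le (hρ : ρ.PosSemidef) (hσ : σ.PosSemidef) {α β : ℝ}
    (hα₁ : α < 1) (hαβ : (α / (1 - α)).HolderConjugate β) :
    (mpow ρ (1 - α) * σ).trace.re ≤
      (mpow ρ α).trace.re ^ ((1 - α) / α) * (mpow σ β).trace.re ^ (1 / β) := by
  have holder := re_trace_funCalc_mul_funCalc_le hρ.1 hσ.1 (f := fun x => x ^ (1 - α))
    (g := fun x => x) (fun i => Real.rpow_nonneg (hρ.eigenvalues_nonneg i) _)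
    hσ.eigenvalues_nonneg hαβ
  have hpow : ∀ i, (hρ.1.eigenvalues i ^ (1 - α)) ^ (α / (1 - α)) = hρ.1.eigenvalues i ^ α :=
    fun i => by
      rw [← Real.rpow_mul (hρ.eigenvalues_nonneg i), mul_div_cancel₀ _ (by linarith)]
  rw [funCalc_eq_self hσ.1 fun _ => rfl, one_div_div] at holder
  simp only [hpow] at holder
  rw [re_trace_mpow hρ.1, re_trace_mpow hσ.1]
  exact holder

theorem fid_sq_le_rpow_mul_rpow (hρ : ρ.PosSemidef) (hσ : σ.PosSemidef) {α β : ℝ}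
    (hα₀ : 0 < α) (hα₁ : α < 1) (hαβ : (α / (1 - α)).HolderConjugate β) :
    fid ρ σ ^ 2 ≤ (mpow ρ α).trace.re ^ (1 / α) * (mpow σ β).trace.re ^ (1 / β) := by
  have hρα : 0 ≤ (mpow ρ α).trace.re := by
    rw [re_trace_mpow hρ.1]
    exact Finset.sum_nonneg fun i _ => Real.rpow_nonneg (hρ.eigenvalues_nonneg i) _
  calc fid ρ σ ^ 2 ≤ (mpow ρ α).trace.re * (mpow ρ (1 - α) * σ).trace.re :=
        fid_sq_le_re_trace_mpow_mul hρ hσ hα₀.le hα₁.le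
    _ ≤ (mpow ρ α).trace.re * ((mpow ρ α).trace.re ^ ((1 - α) / α) *
          (mpow σ β).trace.re ^ (1 / β)) :=
        mul_le_mul_of_nonneg_left (re_trace_mpow_one_sub_mul_le hρ hσ hα₁ hαβ) hρα
    _ = _ := by
        rw [← mul_assoc, ← Real.rpow_one_add' hρα (by positivity)]
        congr 2
        field_simp
        ring

theorem IsDensity.re_trace_mpow_pos {ρ : Matrix n n ℂ} (hρ : IsDensity ρ) (s : ℝ) :
    0 < (mpow ρ s).trace.re := by
  have hsum : ∑ i, hρ.1.1.eigenvalues i = 1 := by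
    simpa using congrArg Complex.re (hρ.1.1.trace_eq_sum_eigenvalues.symm.trans hρ.2)
  obtain ⟨i, -, hi⟩ := Finset.exists_lt_of_sum_lt (s := Finset.univ) (f := fun _ => (0 : ℝ))
    (g := hρ.1.1.eigenvalues) (by simp [hsum])
  rw [re_trace_mpow hρ.1.1]
  exact Finset.sum_pos' (fun j _ => Real.rpow_nonneg (hρ.1.eigenvalues_nonneg j) _)
    ⟨i, Finset.mem_univ _, Real.rpow_pos_of_pos hi _⟩

theorem two_mul_logb_le_of_le_fid (hρ : IsDensity ρ) (hσ : IsDensity σ) {F α β : ℝ}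
    (hF : 0 < F) (hfid : F ≤ fid ρ σ) (hα₀ : 0 < α) (hα₁ : α < 1)
    (hαβ : (α / (1 - α)).HolderConjugate β) :
    2 * Real.logb 2 F ≤
      1 / α * Real.logb 2 (mpow ρ α).trace.re + 1 / β * Real.logb 2 (mpow σ β).trace.re := by
  have hρα := hρ.re_trace_mpow_pos α
  have hσβ := hσ.re_trace_mpow_pos β
  rw [← Real.logb_rpow_eq_mul_logb_of_pos hρα, ← Real.logb_rpow_eq_mul_logb_of_pos hσβ,
    ← Real.logb_mul (by positivity) (by positivity), ← Nat.cast_ofNat, ← Real.logb_pow]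
  exact Real.logb_le_logb_of_le one_lt_two (by positivity) ((pow_le_pow_left₀ hF.le hfid 2).trans
    (fid_sq_le_rpow_mul_rpow hρ.1 hσ.1 hα₀ hα₁ hαβ))

end Fidelity

theorem vanDam_Hayden {n : Type*} [Fintype n] [DecidableEq n]
    (ρ σ : Matrix n n ℂ) (hρ : IsDensity ρ) (hσ : IsDensity σ)
    (F : ℝ) (hF : 0 < F) (hfid : F ≤ fid ρ σ)
    (α β : ℝ) (hα1 : 1 / 2 < α) (hα2 : α < 1) (hβ : β = α / (2 * α - 1)) :
    renyiEntropy β σ + (2 * α / (1 - α)) * Real.logb 2 F ≤ renyiEntropy α ρ := by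
  subst hβ
  have h1α : 0 < 1 - α := by linarith
  have h2α : 0 < 2 * α - 1 := by linarith
  have hβ1 : 1 < α / (2 * α - 1) := by rw [lt_div_iff₀ h2α]; linarith
  have hlog := two_mul_logb_le_of_le_fid hρ hσ hF hfid (by linarith) hα2
    (Real.holderConjugate_div_one_sub hα1 hα2)
  rw [renyiEntropy, if_neg hβ1.ne', renyiEntropy, if_neg hα2.ne, ← sub_nonneg]
  generalize Real.logb 2 (mpow ρ α).trace.re = Lρ at hlog ⊢
  generalize Real.logb 2 (mpow σ (α / (2 * α - 1))).trace.re = Lσ at hlog ⊢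
  calc 0 ≤ α / (1 - α) * (1 / α * Lρ + 1 / (α / (2 * α - 1)) * Lσ - 2 * Real.logb 2 F) :=
        mul_nonneg (by positivity) (by linarith)
    _ = _ := by
        rw [one_sub_div h2α.ne', one_div_div, one_div_div,
          show 2 * α - 1 - α = -(1 - α) by ring, div_neg]
        field_simp
        ring
end
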